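/- arXiv:1102.1227 — 3 statements merged into one kernel-verified Lean document; each statement's English description precedes it below -/
import Mathlib

section
/- Let A be an n×n real orthogonal matrix and T ⊆ {1,…,n}. If ‖A_{JᶜT}‖ < 1 and h is a vector supported on T (i.e. h_{Tᶜ} = 0) with A_{JT} h_T = 0, then h = 0. -/
/-! An orthogonal `A` is an isometry, and since `h` is supported on `T` with `A_{JT} h_T = 0`,
the vector `A h` vanishes on `J` and equals `A_{JᶜT} h_T` on `Jᶜ`. Hence
`‖h_T‖ = ‖A h‖ = ‖A_{JᶜT} h_T‖ ≤ ‖A_{JᶜT}‖ ‖h_T‖`, which forces `h_T = 0` when `‖A_{JᶜT}‖ < 1`. -/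

open Matrix

/-- Spectral (ℓ²→ℓ² operator) norm of a real matrix. -/
noncomputable def specNorm {α β : Type*} [Fintype α] [Fintype β] [DecidableEq β]
    (B : Matrix α β ℝ) : ℝ :=
  ‖LinearMap.toContinuousLinearMap (Matrix.toEuclideanLin B)‖

/-- Euclidean (ℓ²) norm of a finitely indexed real vector. -/
noncomputable def l2 {α : Type*} [Fintype α] (v : α → ℝ) : ℝ := Real.sqrt (∑ i, v i ^ 2)

/-- ℓ¹ norm of a finitely indexed real vector. -/
def l1 {α : Type*} [Fintype α] (v : α → ℝ) : ℝ := ∑ i, |v i|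

/-- Submatrix of `A` with rows indexed by `J` and columns indexed by `T`. -/
def sub {n : ℕ} (A : Matrix (Fin n) (Fin n) ℝ) (J T : Finset (Fin n)) :
    Matrix J T ℝ := A.submatrix (fun i => (i : Fin n)) (fun j => (j : Fin n))

/-- Submatrix of `A` with rows indexed by `J` (all columns kept). -/
def rowSub {n : ℕ} (A : Matrix (Fin n) (Fin n) ℝ) (J : Finset (Fin n)) :
    Matrix J (Fin n) ℝ := A.submatrix (fun i => (i : Fin n)) id

lemma l2_mulVec_le {α β : Type*} [Fintype α] [Fintype β] [DecidableEq β]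
    (B : Matrix α β ℝ) (x : β → ℝ) : l2 (B *ᵥ x) ≤ specNorm B * l2 x := by
  have h : ‖WithLp.toLp 2 (B *ᵥ x)‖ ≤ specNorm B * ‖WithLp.toLp 2 x‖ :=
    (LinearMap.toContinuousLinearMap (Matrix.toEuclideanLin B)).le_opNorm (WithLp.toLp 2 x)
  simpa only [l2, EuclideanSpace.norm_eq, Real.norm_eq_abs, sq_abs] using h

lemma l2_eq_sqrt_dotProduct {α : Type*} [Fintype α] (v : α → ℝ) : l2 v = √(v ⬝ᵥ v) := by
  simp only [l2, dotProduct, sq]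

lemma l2_eq_zero_iff {α : Type*} [Fintype α] {v : α → ℝ} : l2 v = 0 ↔ v = 0 := by
  have hv : 0 ≤ v ⬝ᵥ v := Finset.sum_nonneg fun i _ => mul_self_nonneg (v i)
  rw [l2_eq_sqrt_dotProduct, Real.sqrt_eq_zero hv, dotProduct_self_eq_zero]

lemma eq_zero_of_l2_le_mul {α : Type*} [Fintype α] {v : α → ℝ} {c : ℝ} (hc : c < 1)
    (hv : l2 v ≤ c * l2 v) : v = 0 := by
  have : 0 ≤ l2 v := Real.sqrt_nonneg _
  exact l2_eq_zero_iff.mp (by nlinarith)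

lemma l2_mulVec_of_transpose_mul_self {α β : Type*} [Fintype α] [Fintype β] [DecidableEq β]
    {A : Matrix α β ℝ} (hA : Aᵀ * A = 1) (x : β → ℝ) : l2 (A *ᵥ x) = l2 x := by
  rw [l2_eq_sqrt_dotProduct, l2_eq_sqrt_dotProduct, dotProduct_comm, dotProduct_mulVec,
    ← mulVec_transpose, mulVec_mulVec, hA, one_mulVec]

lemma l2_subtype_of_eq_zero_off {α : Type*} [Fintype α] {s : Finset α} {v : α → ℝ}
    (hv : ∀ i ∉ s, v i = 0) : l2 (fun i : s => v i) = l2 v := by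
  unfold l2
  rw [Finset.sum_coe_sort s (fun i => v i ^ 2)]
  congr 1
  exact Finset.sum_subset (Finset.subset_univ s) fun i _ hi => by simp [hv i hi]

lemma sub_mulVec_of_eq_zero_off {n : ℕ} (A : Matrix (Fin n) (Fin n) ℝ) (S T : Finset (Fin n))
    {h : Fin n → ℝ} (hsupp : ∀ i, i ∉ T → h i = 0) :
    sub A S T *ᵥ (fun j : T => h j) = fun i : S => (A *ᵥ h) i := by
  funext i
  simp only [mulVec, dotProduct, _root_.sub, submatrix_apply]
  rw [Finset.sum_coe_sort T (fun j => A i j * h j)]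
  exact Finset.sum_subset (Finset.subset_univ T) fun j _ hj => by simp [hsupp j hj]

theorem stmt2 {n : ℕ} (A : Matrix (Fin n) (Fin n) ℝ)
    (hA : Aᵀ * A = 1) (J T : Finset (Fin n))
    (hnorm : specNorm (sub A Jᶜ T) < 1)
    (h : Fin n → ℝ) (hsupp : ∀ i, i ∉ T → h i = 0)
    (hker : (sub A J T).mulVec (fun j : T => h j) = 0) :
    h = 0 := by
  have hAh : ∀ i, i ∉ Jᶜ → (A *ᵥ h) i = 0 := fun i hi =>
    congrFun (sub_mulVec_of_eq_zero_off A J T hsupp ▸ hker) ⟨i, by simpa using hi⟩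
  have hle : l2 (fun j : T => h j) ≤ specNorm (sub A Jᶜ T) * l2 (fun j : T => h j) :=
    calc l2 (fun j : T => h j) = l2 h := l2_subtype_of_eq_zero_off hsupp
      _ = l2 (A *ᵥ h) := (l2_mulVec_of_transpose_mul_self hA h).symm
      _ = l2 (sub A Jᶜ T *ᵥ fun j : T => h j) := by
        rw [sub_mulVec_of_eq_zero_off A Jᶜ T hsupp, l2_subtype_of_eq_zero_off hAh]
      _ ≤ _ := l2_mulVec_le _ _
  have hT : (fun j : T => h j) = 0 := eq_zero_of_l2_le_mul hnorm hle
  funext i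
  by_cases hi : i ∈ T
  · exact congrFun hT ⟨i, hi⟩
  · exact hsupp i hi
end

section
/- Dual certificate lemma: Let A be an n×n real orthogonal matrix, Ω ⊆ {1,…,n} with subsets S ⊆ Ω and J = Ω \ S, and T ⊆ {1,…,n}. Let x⋆ ∈ ℝⁿ be supported on T and e⋆ ∈ ℝ^Ω supported on S, and λ > 0. Suppose there exist vectors z⁽ˣ⁾ ∈ ℝⁿ and z⁽ᵉ⁾ ∈ ℝ^Ω with (1) z⁽ˣ⁾ = λ A_{Ω•}ᵀ z⁽ᵉ⁾, (2) z⁽ˣ⁾_T = sgn(x⋆_T) and ‖z⁽ˣ⁾_{Tᶜ}‖_∞ ≤ 3/4, (3) z⁽ᵉ⁾_S = sgn(e⋆_S) and ‖z⁽ᵉ⁾_J‖_∞ ≤ 3/4. Then for every h ∈ ℝⁿ and f = −A_{Ω•} h, one has ‖x⋆ + h‖₁ + λ‖e⋆ + f‖₁ ≥ ‖x⋆‖₁ + λ‖e⋆‖₁ + (1/4)(‖h_{Tᶜ}‖₁ + λ‖A_{J•} h‖₁). -/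
open Matrix

lemma abs_add_sign (a b : ℝ) : |a| + Real.sign a * b ≤ |a + b| := by
  rcases lt_trichotomy a 0 with hc|hc|hc
  · rw [Real.sign_of_neg hc, abs_of_neg hc]
    nlinarith [neg_abs_le (a+b)]
  · simp [hc]
  · rw [Real.sign_of_pos hc, abs_of_pos hc]
    nlinarith [le_abs_self (a+b)]

/-- Dual certificate lemma. -/
theorem stmt3 {n : ℕ} (A : Matrix (Fin n) (Fin n) ℝ) (hA : Aᵀ * A = 1)
    (Ω S T : Finset (Fin n)) (hSΩ : S ⊆ Ω) (J : Finset (Fin n)) (hJ : J = Ω \ S)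
    (xs : Fin n → ℝ) (hxs : ∀ i, i ∉ T → xs i = 0)
    (es : Ω → ℝ) (hes : ∀ i : Ω, (i : Fin n) ∉ S → es i = 0)
    (lam : ℝ) (hlam : 0 < lam)
    (zx : Fin n → ℝ) (ze : Ω → ℝ)
    (h1 : zx = lam • (rowSub A Ω)ᵀ.mulVec ze)
    (h2T : ∀ i, i ∈ T → zx i = Real.sign (xs i))
    (h2Tc : ∀ i, i ∉ T → |zx i| ≤ 3 / 4)
    (h3S : ∀ i : Ω, (i : Fin n) ∈ S → ze i = Real.sign (es i))
    (h3J : ∀ i : Ω, (i : Fin n) ∈ J → |ze i| ≤ 3 / 4)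
    (h : Fin n → ℝ) (f : Ω → ℝ) (hf : f = -(rowSub A Ω).mulVec h) :
    l1 (fun i => xs i + h i) + lam * l1 (fun i : Ω => es i + f i) ≥
      l1 xs + lam * l1 es +
        (1 / 4) * ((∑ i ∈ Tᶜ, |h i|) + lam * ∑ i ∈ J, |A.mulVec h i|) := by
  classical
  set g : Fin n → ℝ := A.mulVec h with hg
  have hfval : ∀ j : Ω, f j = -(g (↑j)) := by
    intro j
    rw [hf]
    simp [rowSub, Matrix.mulVec, dotProduct, g]
  set SΩ : Finset Ω := Finset.univ.filter (fun j : Ω => (j : Fin n) ∈ S) with hSΩdef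
  -- membership facts
  have hmemJ : ∀ j : Ω, j ∈ SΩᶜ → (j : Fin n) ∈ J := by
    intro j hj
    rw [hJ, Finset.mem_sdiff]
    exact ⟨j.2, by simpa [hSΩdef] using hj⟩
  -- Step A
  have hxsum : l1 xs = ∑ i ∈ T, |xs i| := by
    rw [l1, ← Finset.sum_add_sum_compl T]
    have : ∑ i ∈ Tᶜ, |xs i| = 0 :=
      Finset.sum_eq_zero fun i hi => by simp [hxs i (Finset.mem_compl.mp hi)]
    rw [this, add_zero]
  have hA1 : l1 xs + (∑ i ∈ T, zx i * h i) + ∑ i ∈ Tᶜ, |h i|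
      ≤ l1 (fun i => xs i + h i) := by
    have hsplit : l1 (fun i => xs i + h i)
        = ∑ i ∈ T, |xs i + h i| + ∑ i ∈ Tᶜ, |xs i + h i| :=
      (Finset.sum_add_sum_compl T _).symm
    have hc : ∑ i ∈ Tᶜ, |xs i + h i| = ∑ i ∈ Tᶜ, |h i| :=
      Finset.sum_congr rfl fun i hi => by simp [hxs i (Finset.mem_compl.mp hi)]
    have hT : ∑ i ∈ T, (|xs i| + zx i * h i) ≤ ∑ i ∈ T, |xs i + h i| := by
      refine Finset.sum_le_sum fun i hi => ?_
      rw [h2T i hi]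
      exact abs_add_sign _ _
    rw [hsplit, hc, hxsum]
    rw [Finset.sum_add_distrib] at hT
    linarith
  -- Step B
  have hesum : l1 es = ∑ j ∈ SΩ, |es j| := by
    rw [l1, ← Finset.sum_add_sum_compl SΩ]
    have : ∑ j ∈ SΩᶜ, |es j| = 0 :=
      Finset.sum_eq_zero fun j hj => by
        simp [hes j (by simpa [hSΩdef] using hj)]
    rw [this, add_zero]
  have hB1 : l1 es + (∑ j ∈ SΩ, ze j * f j) + ∑ j ∈ SΩᶜ, |f j|
      ≤ l1 (fun j : Ω => es j + f j) := by
    have hsplit : l1 (fun j : Ω => es j + f j)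
        = ∑ j ∈ SΩ, |es j + f j| + ∑ j ∈ SΩᶜ, |es j + f j| :=
      (Finset.sum_add_sum_compl SΩ _).symm
    have hc : ∑ j ∈ SΩᶜ, |es j + f j| = ∑ j ∈ SΩᶜ, |f j| :=
      Finset.sum_congr rfl fun j hj => by
        simp [hes j (by simpa [hSΩdef] using hj)]
    have hS : ∑ j ∈ SΩ, (|es j| + ze j * f j) ≤ ∑ j ∈ SΩ, |es j + f j| := by
      refine Finset.sum_le_sum fun j hj => ?_
      rw [h3S j (by simpa [hSΩdef] using hj)]
      exact abs_add_sign _ _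
    rw [hsplit, hc, hesum]
    rw [Finset.sum_add_distrib] at hS
    linarith
  -- Step C : key identity
  have key : ∑ i, zx i * h i = -(lam * ∑ j : Ω, ze j * f j) := by
    have hmain : ∑ i, zx i * h i = lam * ∑ j : Ω, ze j * g (↑j) := by
      rw [h1]
      have expand : ∀ i, (lam • (rowSub A Ω)ᵀ.mulVec ze) i * h i
          = ∑ j : Ω, lam * (ze j * (A (↑j) i * h i)) := by
        intro i
        simp only [Pi.smul_apply, smul_eq_mul, Matrix.mulVec, dotProduct,
          Matrix.transpose_apply, rowSub, Matrix.submatrix_apply, id]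
        rw [Finset.mul_sum, Finset.sum_mul]
        exact Finset.sum_congr rfl fun j _ => by ring
      simp only [expand]
      rw [Finset.sum_comm, Finset.mul_sum]
      refine Finset.sum_congr rfl fun j _ => ?_
      rw [← Finset.mul_sum, ← Finset.mul_sum]
      have hgj : g (↑j) = ∑ i, A (↑j) i * h i := by
        simp [g, Matrix.mulVec, dotProduct]
      rw [hgj]
    have hneg : ∑ j : Ω, ze j * f j = -(∑ j : Ω, ze j * g (↑j)) := by
      rw [← Finset.sum_neg_distrib]
      exact Finset.sum_congr rfl fun j _ => by rw [hfval j]; ring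
    rw [hmain, hneg]; ring
  -- Step D/E : bounds on complements
  have hEx : -((3/4) * ∑ i ∈ Tᶜ, |h i|) ≤ -(∑ i ∈ Tᶜ, zx i * h i) := by
    have : |∑ i ∈ Tᶜ, zx i * h i| ≤ ∑ i ∈ Tᶜ, (3/4) * |h i| := by
      refine (Finset.abs_sum_le_sum_abs _ _).trans (Finset.sum_le_sum fun i hi => ?_)
      rw [abs_mul]
      exact mul_le_mul_of_nonneg_right (h2Tc i (Finset.mem_compl.mp hi)) (abs_nonneg _)
    rw [Finset.mul_sum]
    linarith [le_abs_self (∑ i ∈ Tᶜ, zx i * h i), this]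
  have hEe : -((3/4) * ∑ j ∈ SΩᶜ, |f j|) ≤ -(∑ j ∈ SΩᶜ, ze j * f j) := by
    have : |∑ j ∈ SΩᶜ, ze j * f j| ≤ ∑ j ∈ SΩᶜ, (3/4) * |f j| := by
      refine (Finset.abs_sum_le_sum_abs _ _).trans (Finset.sum_le_sum fun j hj => ?_)
      rw [abs_mul]
      exact mul_le_mul_of_nonneg_right (h3J j (hmemJ j hj)) (abs_nonneg _)
    rw [Finset.mul_sum]
    linarith [le_abs_self (∑ j ∈ SΩᶜ, ze j * f j), this]
  -- Step F : reindex
  have hF : ∑ j ∈ SΩᶜ, |f j| = ∑ i ∈ J, |g i| := by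
    have h1' : ∑ j ∈ SΩᶜ, |f j| = ∑ j : Ω, (if (j : Fin n) ∉ S then |g ↑j| else 0) := by
      rw [← Finset.sum_filter]
      refine Finset.sum_congr ?_ fun j _ => by rw [hfval j, abs_neg]
      ext j; simp [hSΩdef]
    rw [h1']
    rw [Finset.sum_coe_sort Ω (fun i => if i ∉ S then |g i| else 0)]
    rw [← Finset.sum_filter, hJ, Finset.sdiff_eq_filter]
  -- splits
  have hsplitT : ∑ i ∈ T, zx i * h i = (∑ i, zx i * h i) - ∑ i ∈ Tᶜ, zx i * h i := by
    rw [← Finset.sum_add_sum_compl T (fun i => zx i * h i)]; ring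
  have hsplitS : ∑ j ∈ SΩ, ze j * f j = (∑ j : Ω, ze j * f j) - ∑ j ∈ SΩᶜ, ze j * f j := by
    rw [← Finset.sum_add_sum_compl SΩ (fun j => ze j * f j)]; ring
  -- combine
  have hB1' : lam * l1 es + lam * (∑ j ∈ SΩ, ze j * f j) + lam * ∑ j ∈ SΩᶜ, |f j|
      ≤ lam * l1 (fun j : Ω => es j + f j) := by
    have := mul_le_mul_of_nonneg_left hB1 hlam.le
    linarith [this, (by ring : lam * (l1 es + (∑ j ∈ SΩ, ze j * f j) + ∑ j ∈ SΩᶜ, |f j|)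
      = lam * l1 es + lam * (∑ j ∈ SΩ, ze j * f j) + lam * ∑ j ∈ SΩᶜ, |f j|)]
  have hEe' : -((3/4) * (lam * ∑ j ∈ SΩᶜ, |f j|)) ≤ -(lam * (∑ j ∈ SΩᶜ, ze j * f j)) := by
    have := mul_le_mul_of_nonneg_left hEe hlam.le
    linarith [this, (by ring : lam * (-(∑ j ∈ SΩᶜ, ze j * f j)) = -(lam * (∑ j ∈ SΩᶜ, ze j * f j))),
      (by ring : lam * (-((3/4) * ∑ j ∈ SΩᶜ, |f j|)) = -((3/4) * (lam * ∑ j ∈ SΩᶜ, |f j|)))]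
  have hsplitS' : lam * ∑ j ∈ SΩ, ze j * f j
      = lam * (∑ j : Ω, ze j * f j) - lam * ∑ j ∈ SΩᶜ, ze j * f j := by
    rw [hsplitS]; ring
  have c1 : -(3/4) * (∑ i ∈ Tᶜ, |h i|) - (3/4) * (lam * ∑ j ∈ SΩᶜ, |f j|)
      ≤ (∑ i ∈ T, zx i * h i) + lam * ∑ j ∈ SΩ, ze j * f j := by
    have t1 : ∑ i ∈ T, zx i * h i + lam * ∑ j ∈ SΩ, ze j * f j
        = -(∑ i ∈ Tᶜ, zx i * h i) + -(lam * ∑ j ∈ SΩᶜ, ze j * f j) := by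
      rw [hsplitT, hsplitS', key]; ring
    rw [t1]
    linarith [hEx, hEe']
  rw [ge_iff_le, ← hF]
  linarith [hA1, hB1', c1]
end

section
/- Let A be an n×n real orthogonal matrix, Ω ⊆ {1,…,n}, T a column index set, and η ∈ (0,1], ε ∈ [0, 1/2]. Suppose ‖I − η⁻¹ A_{ΩT}ᵀ A_{ΩT}‖ ≤ ε. Then for every vector u, (η/2) ‖A_{ΩᶜT}ᵀ u‖₂² ≤ ‖A_{ΩT} A_{ΩᶜT}ᵀ u‖₂². -/
/-!
With `B = A_{ΩT}`, the norm hypothesis bounds the quadratic form of `I - η⁻¹ BᵀB` by `ε ‖v‖²`,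
that is `(1 - ε) ‖v‖² ≤ η⁻¹ ‖B v‖²` for every `v`. Taking `v = A_{ΩᶜT}ᵀ u` and using
`1 - ε ≥ 1/2` gives the claim.
-/

open Matrix

section EuclideanBounds

variable {α β : Type*} [Fintype α]

lemma l2_sq (v : α → ℝ) : l2 v ^ 2 = v ⬝ᵥ v := by
  rw [l2, Real.sq_sqrt (Finset.sum_nonneg fun _ _ => sq_nonneg _)]
  simp only [dotProduct, sq]

lemma l2_eq_norm_toLp (v : α → ℝ) : l2 v = ‖(WithLp.toLp 2 v : EuclideanSpace ℝ α)‖ := by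
  simp [l2, EuclideanSpace.norm_eq]

lemma abs_dotProduct_mulVec_le_specNorm_mul_l2_sq [DecidableEq α] (M : Matrix α α ℝ)
    (v : α → ℝ) : |v ⬝ᵥ M *ᵥ v| ≤ specNorm M * l2 v ^ 2 := by
  set x : EuclideanSpace ℝ α := WithLp.toLp 2 v
  have hMx : ‖(WithLp.toLp 2 (M *ᵥ v) : EuclideanSpace ℝ α)‖ ≤ specNorm M * ‖x‖ :=
    (LinearMap.toContinuousLinearMap (Matrix.toEuclideanLin M)).le_opNorm x
  calc |v ⬝ᵥ M *ᵥ v| = |inner ℝ x (WithLp.toLp 2 (M *ᵥ v))| := by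
        rw [EuclideanSpace.inner_toLp_toLp, dotProduct_comm]; rfl
    _ ≤ ‖x‖ * (specNorm M * ‖x‖) :=
        (abs_real_inner_le_norm _ _).trans (mul_le_mul_of_nonneg_left hMx (norm_nonneg _))
    _ = specNorm M * l2 v ^ 2 := by rw [l2_eq_norm_toLp]; ring

variable [Fintype β]

lemma dotProduct_transpose_mul_self_mulVec (B : Matrix β α ℝ) (v : α → ℝ) :
    v ⬝ᵥ (Bᵀ * B) *ᵥ v = l2 (B *ᵥ v) ^ 2 := by
  rw [l2_sq, ← mulVec_mulVec, dotProduct_mulVec, vecMul_transpose]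

lemma one_sub_mul_l2_sq_le_of_specNorm_le [DecidableEq α] (B : Matrix β α ℝ) {c ε : ℝ}
    (h : specNorm (1 - c • (Bᵀ * B)) ≤ ε) (v : α → ℝ) :
    (1 - ε) * l2 v ^ 2 ≤ c * l2 (B *ᵥ v) ^ 2 := by
  have hform : v ⬝ᵥ (1 - c • (Bᵀ * B)) *ᵥ v = l2 v ^ 2 - c * l2 (B *ᵥ v) ^ 2 := by
    rw [sub_mulVec, one_mulVec, smul_mulVec, dotProduct_sub, dotProduct_smul, smul_eq_mul,
      dotProduct_transpose_mul_self_mulVec, ← l2_sq]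
  have hbound := abs_dotProduct_mulVec_le_specNorm_mul_l2_sq (1 - c • (Bᵀ * B)) v
  rw [hform] at hbound
  linarith [(abs_le.mp hbound).2, mul_le_mul_of_nonneg_right h (sq_nonneg (l2 v))]

end EuclideanBounds

theorem stmt8_general {n : ℕ} (A : Matrix (Fin n) (Fin n) ℝ)
    (Ω T : Finset (Fin n)) (η ε : ℝ) (hη0 : 0 < η)
    (hε : ε ≤ 1 / 2)
    (hnorm : specNorm ((1 : Matrix T T ℝ) - η⁻¹ • ((sub A Ω T)ᵀ * sub A Ω T)) ≤ ε)
    (u : ↥(Ωᶜ) → ℝ) :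
    (η / 2) * l2 ((sub A Ωᶜ T)ᵀ.mulVec u) ^ 2 ≤
      l2 ((sub A Ω T).mulVec ((sub A Ωᶜ T)ᵀ.mulVec u)) ^ 2 := by
  set v := (sub A Ωᶜ T)ᵀ *ᵥ u
  have hlower := one_sub_mul_l2_sq_le_of_specNorm_le (sub A Ω T) hnorm v
  calc η / 2 * l2 v ^ 2 ≤ η * ((1 - ε) * l2 v ^ 2) := by
        linarith [mul_nonneg (mul_nonneg hη0.le (sub_nonneg.2 hε)) (sq_nonneg (l2 v))]
    _ ≤ η * (η⁻¹ * l2 (sub A Ω T *ᵥ v) ^ 2) := mul_le_mul_of_nonneg_left hlower hη0.le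
    _ = l2 (sub A Ω T *ᵥ v) ^ 2 := by field_simp

theorem stmt8 {n : ℕ} (A : Matrix (Fin n) (Fin n) ℝ) (hA : Aᵀ * A = 1)
    (Ω T : Finset (Fin n)) (η ε : ℝ) (hη0 : 0 < η) (hη1 : η ≤ 1)
    (hε0 : 0 ≤ ε) (hε : ε ≤ 1 / 2)
    (hnorm : specNorm ((1 : Matrix T T ℝ) - η⁻¹ • ((sub A Ω T)ᵀ * sub A Ω T)) ≤ ε)
    (u : ↥(Ωᶜ) → ℝ) :
    (η / 2) * l2 ((sub A Ωᶜ T)ᵀ.mulVec u) ^ 2 ≤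
      l2 ((sub A Ω T).mulVec ((sub A Ωᶜ T)ᵀ.mulVec u)) ^ 2 :=
  stmt8_general A Ω T η ε hη0 hε hnorm u
end
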